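/- Abstract stability of the two-step recursion: Suppose non-negative numbers (G_n)_{n=1}^N, (D_n)_{n=0}^N, (F_n)_{n=2}^N, constants ε, ϵ > 0 with ϵ + 10ε ≤ 1, τ > 0, α ≥ 0 satisfy, for n = 1,…,N−1, G_{n+1} − G_n + 4τ(1−ϵ) D_{n+1} ≤ 4τε(8D_n + 2D_{n−1}) + ατ( G_n + 32ετD_n + 8ετD_{n−1} ) + τ F_{n+1}. Then G_N + 40ετ D_N + 4τ(1−ϵ−10ε) ∑_{n=2}^N D_n ≤ e^{ατN} ( G_1 + 4τε(10 D_1 + 2 D_0) + τ ∑_{n=2}^N F_n ). -/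

import Mathlib

/-!
With the modified energy `E n = G n + 40ετ D n + 8ετ D (n - 1)` the recursion becomes the
one-step inequality `E (n + 1) + 4τ(1 - ϵ - 10ε) D (n + 1) ≤ (1 + ατ) E n + τ F (n + 1)`:
the dissipation `8εD n + 2εD (n - 1)` on the right telescopes into the `D`-terms of `E`, leaving
the fraction `1 - ϵ - 10ε` of `D (n + 1)`. Adding the accumulated dissipation to `E` keeps this
form, and the discrete Grönwall inequality finishes the proof.
-/

open Finset Real

theorem discrete_gronwall_of_mem_Ico {u b c : ℕ → ℝ} {n₀ N : ℕ} (hN : n₀ ≤ N)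
    (hun₀ : 0 ≤ u n₀) (hu : ∀ n ∈ Ico n₀ N, u (n + 1) ≤ (1 + c n) * u n + b n)
    (hc : ∀ n ∈ Ico n₀ N, 0 ≤ c n) (hb : ∀ n ∈ Ico n₀ N, 0 ≤ b n) :
    u N ≤ (u n₀ + ∑ k ∈ Ico n₀ N, b k) * exp (∑ i ∈ Ico n₀ N, c i) := by
  -- Freeze `u` from time `N` on, where it then satisfies the recursion with `b = c = 0`.
  set u' : ℕ → ℝ := fun n ↦ u (min n N)
  set b' : ℕ → ℝ := fun n ↦ if n < N then b n else 0
  set c' : ℕ → ℝ := fun n ↦ if n < N then c n else 0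
  have hu' : ∀ n ≥ n₀, u' (n + 1) ≤ (1 + c' n) * u' n + b' n := by
    intro n hn
    by_cases hnN : n < N
    · simpa [u', b', c', hnN, Nat.succ_le_of_lt hnN, hnN.le] using hu n (mem_Ico.2 ⟨hn, hnN⟩)
    · simp [u', b', c', hnN, show N ≤ n by omega, show N ≤ n + 1 by omega]
  have hc' : ∀ n ≥ n₀, 0 ≤ c' n := fun n hn ↦ by
    by_cases hnN : n < N <;> simp [c', hnN, hc n (mem_Ico.2 ⟨hn, _⟩)]
  have hb' : ∀ n ≥ n₀, 0 ≤ b' n := fun n hn ↦ by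
    by_cases hnN : n < N <;> simp [b', hnN, hb n (mem_Ico.2 ⟨hn, _⟩)]
  have hagree : ∀ f : ℕ → ℝ, ∑ k ∈ Ico n₀ N, (if k < N then f k else 0) = ∑ k ∈ Ico n₀ N, f k :=
    fun f ↦ sum_congr rfl fun k hk ↦ if_pos (mem_Ico.1 hk).2
  simpa [u', b', c', hagree, hN] using discrete_gronwall (u := u') (by simpa [u', hN]) hu' hc' hb' hN

theorem discrete_gronwall_add_sum {a d b c : ℕ → ℝ} {n₀ N : ℕ} (hN : n₀ ≤ N)
    (ha₀ : 0 ≤ a n₀) (hrec : ∀ n ∈ Ico n₀ N, a (n + 1) + d (n + 1) ≤ (1 + c n) * a n + b n)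
    (hd : ∀ n ∈ Ioc n₀ N, 0 ≤ d n) (hc : ∀ n ∈ Ico n₀ N, 0 ≤ c n)
    (hb : ∀ n ∈ Ico n₀ N, 0 ≤ b n) :
    a N + ∑ k ∈ Ioc n₀ N, d k ≤ (a n₀ + ∑ k ∈ Ico n₀ N, b k) * exp (∑ i ∈ Ico n₀ N, c i) := by
  refine discrete_gronwall_of_mem_Ico (u := fun n ↦ a n + ∑ k ∈ Ioc n₀ n, d k) hN
    (by simpa using ha₀) (fun n hn ↦ ?_) hc hb |>.trans_eq (by simp)
  obtain ⟨hn₀, hnN⟩ := mem_Ico.1 hn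
  have hS : 0 ≤ ∑ k ∈ Ioc n₀ n, d k :=
    sum_nonneg fun k hk ↦ hd k (Ioc_subset_Ioc_right hnN.le hk)
  have hcS : 0 ≤ c n * ∑ k ∈ Ioc n₀ n, d k := mul_nonneg (hc n hn) hS
  simp only [sum_Ioc_succ_top hn₀]
  linarith [hrec n hn]

def twoStepEnergy (G D : ℕ → ℝ) (ε τ : ℝ) (n : ℕ) : ℝ :=
  G n + 40 * ε * τ * D n + 8 * ε * τ * D (n - 1)

theorem twoStepEnergy_succ_add_le {G D F : ℕ → ℝ} {ε ϵ τ α : ℝ} {n : ℕ}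
    (hε : 0 ≤ ε) (hτ : 0 ≤ τ) (hα : 0 ≤ α) (hDn : 0 ≤ D n)
    (hrec : G (n + 1) - G n + 4 * τ * (1 - ϵ) * D (n + 1) ≤
        4 * τ * ε * (8 * D n + 2 * D (n - 1))
          + α * τ * (G n + 32 * ε * τ * D n + 8 * ε * τ * D (n - 1))
          + τ * F (n + 1)) :
    twoStepEnergy G D ε τ (n + 1) + 4 * τ * (1 - ϵ - 10 * ε) * D (n + 1) ≤
      (1 + α * τ) * twoStepEnergy G D ε τ n + τ * F (n + 1) := by
  have hgap : 0 ≤ α * τ * (8 * ε * τ * D n) := by positivity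
  simp only [twoStepEnergy, Nat.add_sub_cancel]
  linarith

theorem two_step_recursion_stability_general (N : ℕ) (hN : 2 ≤ N)
    (G D F : ℕ → ℝ) (ε ϵ τ α : ℝ)
    (hε : 0 < ε) (hεϵ : ϵ + 10 * ε ≤ 1) (hτ : 0 < τ) (hα : 0 ≤ α)
    (hG : ∀ n, 1 ≤ n → n ≤ N → 0 ≤ G n) (hD : ∀ n ≤ N, 0 ≤ D n)
    (hF : ∀ n, 2 ≤ n → n ≤ N → 0 ≤ F n)
    (hrec : ∀ n, 1 ≤ n → n < N →
      G (n + 1) - G n + 4 * τ * (1 - ϵ) * D (n + 1) ≤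
        4 * τ * ε * (8 * D n + 2 * D (n - 1))
          + α * τ * (G n + 32 * ε * τ * D n + 8 * ε * τ * D (n - 1))
          + τ * F (n + 1)) :
    G N + 40 * ε * τ * D N + 4 * τ * (1 - ϵ - 10 * ε) * ∑ n ∈ Finset.Icc 2 N, D n ≤
      Real.exp (α * τ * N) *
        (G 1 + 4 * τ * ε * (10 * D 1 + 2 * D 0) + τ * ∑ n ∈ Finset.Icc 2 N, F n) := by
  set E := twoStepEnergy G D ε τ
  set κ := 4 * τ * (1 - ϵ - 10 * ε)
  have hκ : 0 ≤ κ := mul_nonneg (by positivity) (by linarith)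
  have hE₁ : E 1 = G 1 + 4 * τ * ε * (10 * D 1 + 2 * D 0) := by simp only [E, twoStepEnergy]; ring
  have hE₁_nonneg : 0 ≤ E 1 := by
    have := hG 1 le_rfl (by omega)
    have := hD 0 (by omega)
    have := hD 1 (by omega)
    rw [hE₁]; positivity
  have hgronwall := discrete_gronwall_add_sum (a := E) (d := fun n ↦ κ * D n)
    (b := fun n ↦ τ * F (n + 1)) (c := fun _ ↦ α * τ) (by omega : 1 ≤ N) hE₁_nonneg
    (fun n hn ↦ twoStepEnergy_succ_add_le hε.le hτ.le hα (hD n (mem_Ico.1 hn).2.le)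
      (hrec n (mem_Ico.1 hn).1 (mem_Ico.1 hn).2))
    (fun n hn ↦ mul_nonneg hκ (hD n (mem_Ioc.1 hn).2)) (fun _ _ ↦ by positivity)
    (fun n hn ↦ mul_nonneg hτ.le (hF _ (by grind) (by grind)))
  rw [← mul_sum, ← mul_sum, sum_Ico_add' F, ← Icc_add_one_left_eq_Ioc, Ico_add_one_right_eq_Icc,
    sum_const, Nat.card_Ico, nsmul_eq_mul, one_add_one_eq_two] at hgronwall
  have hexp : exp (((N - 1 : ℕ) : ℝ) * (α * τ)) ≤ exp (α * τ * N) := by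
    refine exp_le_exp.2 ?_
    nlinarith [mul_nonneg hα hτ.le, (by exact_mod_cast Nat.sub_le N 1 : ((N - 1 : ℕ) : ℝ) ≤ N)]
  have hFsum : 0 ≤ ∑ n ∈ Icc 2 N, F n :=
    sum_nonneg fun n hn ↦ hF n (mem_Icc.1 hn).1 (mem_Icc.1 hn).2
  have hDN : 0 ≤ 8 * ε * τ * D (N - 1) := mul_nonneg (by positivity) (hD _ (Nat.sub_le N 1))
  calc G N + 40 * ε * τ * D N + κ * ∑ n ∈ Icc 2 N, D n
      ≤ E N + κ * ∑ n ∈ Icc 2 N, D n := by simp only [E, twoStepEnergy]; linarith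
    _ ≤ (E 1 + τ * ∑ n ∈ Icc 2 N, F n) * exp (((N - 1 : ℕ) : ℝ) * (α * τ)) := hgronwall
    _ ≤ exp (α * τ * N) * (E 1 + τ * ∑ n ∈ Icc 2 N, F n) := by
      rw [mul_comm]; gcongr
    _ = _ := by rw [hE₁]

/-- Abstract stability of the two-step recursion (second-order coupled IMEX scheme):
if for `n = 1,…,N−1`,
`G_{n+1} − G_n + 4τ(1−ϵ)D_{n+1} ≤ 4τε(8D_n + 2D_{n−1}) + ατ(G_n + 32ετD_n + 8ετD_{n−1}) + τF_{n+1}`,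
then `G_N + 40ετD_N + 4τ(1−ϵ−10ε)∑_{n=2}^N D_n ≤ e^{ατN}(G_1 + 4τε(10D_1 + 2D_0) + τ∑_{n=2}^N F_n)`. -/
theorem two_step_recursion_stability (N : ℕ) (hN : 2 ≤ N)
    (G D F : ℕ → ℝ) (ε ϵ τ α : ℝ)
    (hε : 0 < ε) (hϵ : 0 < ϵ) (hεϵ : ϵ + 10 * ε ≤ 1) (hτ : 0 < τ) (hα : 0 ≤ α)
    (hG : ∀ n, 1 ≤ n → n ≤ N → 0 ≤ G n) (hD : ∀ n ≤ N, 0 ≤ D n)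
    (hF : ∀ n, 2 ≤ n → n ≤ N → 0 ≤ F n)
    (hrec : ∀ n, 1 ≤ n → n < N →
      G (n + 1) - G n + 4 * τ * (1 - ϵ) * D (n + 1) ≤
        4 * τ * ε * (8 * D n + 2 * D (n - 1))
          + α * τ * (G n + 32 * ε * τ * D n + 8 * ε * τ * D (n - 1))
          + τ * F (n + 1)) :
    G N + 40 * ε * τ * D N + 4 * τ * (1 - ϵ - 10 * ε) * ∑ n ∈ Finset.Icc 2 N, D n ≤
      Real.exp (α * τ * N) *
        (G 1 + 4 * τ * ε * (10 * D 1 + 2 * D 0) + τ * ∑ n ∈ Finset.Icc 2 N, F n) :=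
  two_step_recursion_stability_general N hN G D F ε ϵ τ α hε hεϵ hτ hα hG hD hF hrec
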